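/- Let (A⊗V,μ_{A⊗V}) and (A⊗W,μ_{A⊗W}) be weak crossed products with preunits ν_V and ν_W. Suppose there exist morphisms T:A⊗V→A⊗W and S:A⊗W→A⊗V of left A-modules satisfying T∘ν_V=ν_W, T∘μ_{A⊗V}=μ_{A⊗W}∘(T⊗T), S∘T=∇_{A⊗V}, and T∘S=∇_{A⊗W}. Then the morphisms γ:=T∘(η_A⊗V):V→A⊗W and θ:=∇_{A⊗V}∘S∘(η_A⊗W):W→A⊗V satisfy: ν_V=(μ_A⊗V)∘(A⊗θ)∘ν_W; θ=∇_{A⊗V}∘θ; ψ_W=(μ_A⊗W)∘(μ_A⊗γ)∘(A⊗ψ_V)∘(θ⊗A); σ_W=(μ_A⊗W)∘(A⊗γ)∘μ_{A⊗V}∘(θ⊗θ); and (μ_A⊗V)∘(A⊗θ)∘γ=∇_{A⊗V}∘(η_A⊗V). -/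

import Mathlib

/-!
A left `A`-linear map `A ⊗ X ⟶ A ⊗ Y` is determined by its restriction along `η_A ⊗ X`, so
`T = (μ_A ⊗ W) ∘ (A ⊗ γ)` and `S ∘ ∇_{A⊗V} = (μ_A ⊗ V) ∘ (A ⊗ θ)`; with `S ∘ T = ∇_{A⊗V}`,
`T ∘ S = ∇_{A⊗W}` and idempotence of `∇` this gives the identities for `ν_V`, `θ` and `γ`, and
`T ∘ θ = ∇_{A⊗W} ∘ (η_A ⊗ W)`.
The structure of `W` is read off its product: `σ = μ_{A⊗W} ∘ (∇(η_A ⊗ W) ⊗ ∇(η_A ⊗ W))` by the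
twisted condition, and `(μ_A ⊗ W) ∘ (A ⊗ ψ) = μ_{A⊗W} ∘ (A ⊗ W ⊗ β_ν)` by the first preunit
condition. As `T` is multiplicative and carries `β_{ν_V}` to `β_{ν_W}`, both formulas transport
along `T` to express `ψ_W` and `σ_W` through `γ` and `θ`.
-/

open CategoryTheory MonoidalCategory

universe v u

namespace WeakCrossed

variable {C : Type u} [Category.{v} C] [MonoidalCategory C]

/-- The monoid axioms for a triple `(A, η, μ)` in a monoidal category. -/
def IsMon (A : C) (eta : 𝟙_ C ⟶ A) (mu : A ⊗ A ⟶ A) : Prop :=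
  (eta ▷ A) ≫ mu = (λ_ A).hom ∧ (A ◁ eta) ≫ mu = (ρ_ A).hom ∧
    (mu ▷ A) ≫ mu = (α_ A A A).hom ≫ (A ◁ mu) ≫ mu

/-- The morphism `(μ_A ⊗ Y) ∘ (A ⊗ f) : (A ⊗ X) ⊗ Z ⟶ A ⊗ Y` for `f : X ⊗ Z ⟶ A ⊗ Y`. -/
def phi (A : C) {X Z Y : C} (mu : A ⊗ A ⟶ A) (f : X ⊗ Z ⟶ A ⊗ Y) :
    (A ⊗ X) ⊗ Z ⟶ A ⊗ Y :=
  (α_ A X Z).hom ≫ (A ◁ f) ≫ (α_ A A Y).inv ≫ (mu ▷ Y)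

/-- The measuring condition `(μ_A ⊗ V) ∘ (A ⊗ ψ) ∘ (ψ ⊗ A) = ψ ∘ (V ⊗ μ_A)`. -/
def Measuring (A V : C) (mu : A ⊗ A ⟶ A) (psi : V ⊗ A ⟶ A ⊗ V) : Prop :=
  (psi ▷ A) ≫ phi A mu psi = (α_ V A A).hom ≫ (V ◁ mu) ≫ psi

/-- The idempotent `∇_{A⊗V} = (μ_A ⊗ V) ∘ (A ⊗ ψ) ∘ (A ⊗ V ⊗ η_A)`. -/
def nabla (A V : C) (eta : 𝟙_ C ⟶ A) (mu : A ⊗ A ⟶ A) (psi : V ⊗ A ⟶ A ⊗ V) :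
    A ⊗ V ⟶ A ⊗ V :=
  (ρ_ (A ⊗ V)).inv ≫ ((A ⊗ V) ◁ eta) ≫ phi A mu psi

/-- The twisted condition
`(μ_A ⊗ V) ∘ (A ⊗ ψ) ∘ (σ ⊗ A) = (μ_A ⊗ V) ∘ (A ⊗ σ) ∘ (ψ ⊗ V) ∘ (V ⊗ ψ)`. -/
def Twisted (A V : C) (mu : A ⊗ A ⟶ A) (psi : V ⊗ A ⟶ A ⊗ V)
    (sig : V ⊗ V ⟶ A ⊗ V) : Prop :=
  (sig ▷ A) ≫ phi A mu psi =
    (α_ V V A).hom ≫ (V ◁ psi) ≫ (α_ V A V).inv ≫ (psi ▷ V) ≫ phi A mu sig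

/-- The cocycle condition
`(μ_A ⊗ V) ∘ (A ⊗ σ) ∘ (σ ⊗ V) = (μ_A ⊗ V) ∘ (A ⊗ σ) ∘ (ψ ⊗ V) ∘ (V ⊗ σ)`. -/
def Cocycle (A V : C) (mu : A ⊗ A ⟶ A) (psi : V ⊗ A ⟶ A ⊗ V)
    (sig : V ⊗ V ⟶ A ⊗ V) : Prop :=
  (sig ▷ V) ≫ phi A mu sig =
    (α_ V V V).hom ≫ (V ◁ sig) ≫ (α_ V A V).inv ≫ (psi ▷ V) ≫ phi A mu sig

/-- The weak crossed product multiplication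
`μ_{A⊗V} = (μ_A ⊗ V) ∘ (μ_A ⊗ σ) ∘ (A ⊗ ψ ⊗ V)`. -/
def prodAV (A V : C) (mu : A ⊗ A ⟶ A) (psi : V ⊗ A ⟶ A ⊗ V)
    (sig : V ⊗ V ⟶ A ⊗ V) : (A ⊗ V) ⊗ (A ⊗ V) ⟶ A ⊗ V :=
  (α_ A V (A ⊗ V)).hom ≫ (A ◁ ((α_ V A V).inv ≫ (psi ▷ V) ≫ (α_ A V V).hom)) ≫
    (α_ A A (V ⊗ V)).inv ≫ (mu ⊗ₘ sig) ≫ (α_ A A V).inv ≫ (mu ▷ V)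

/-- The morphism `η_A ⊗ V : V ⟶ A ⊗ V`. -/
def etaT (A V : C) (eta : 𝟙_ C ⟶ A) : V ⟶ A ⊗ V := (λ_ V).inv ≫ (eta ▷ V)

/-- The morphism `β_ν = (μ_A ⊗ V) ∘ (A ⊗ ν) : A ⟶ A ⊗ V`. -/
def beta (A V : C) (mu : A ⊗ A ⟶ A) (nu : 𝟙_ C ⟶ A ⊗ V) : A ⟶ A ⊗ V :=
  (ρ_ A).inv ≫ (A ◁ nu) ≫ (α_ A A V).inv ≫ (mu ▷ V)

/-- Preunit condition (pre1):
`(μ_A ⊗ V) ∘ (A ⊗ σ) ∘ (ψ ⊗ V) ∘ (V ⊗ ν) = ∇_{A⊗V} ∘ (η_A ⊗ V)`. -/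
def Pre1 (A V : C) (eta : 𝟙_ C ⟶ A) (mu : A ⊗ A ⟶ A) (psi : V ⊗ A ⟶ A ⊗ V)
    (sig : V ⊗ V ⟶ A ⊗ V) (nu : 𝟙_ C ⟶ A ⊗ V) : Prop :=
  (ρ_ V).inv ≫ (V ◁ nu) ≫ (α_ V A V).inv ≫ (psi ▷ V) ≫ phi A mu sig =
    etaT A V eta ≫ nabla A V eta mu psi

/-- Preunit condition (pre2):
`(μ_A ⊗ V) ∘ (A ⊗ σ) ∘ (ν ⊗ V) = ∇_{A⊗V} ∘ (η_A ⊗ V)`. -/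
def Pre2 (A V : C) (eta : 𝟙_ C ⟶ A) (mu : A ⊗ A ⟶ A) (psi : V ⊗ A ⟶ A ⊗ V)
    (sig : V ⊗ V ⟶ A ⊗ V) (nu : 𝟙_ C ⟶ A ⊗ V) : Prop :=
  (λ_ V).inv ≫ (nu ▷ V) ≫ phi A mu sig = etaT A V eta ≫ nabla A V eta mu psi

/-- Preunit condition (pre3): `(μ_A ⊗ V) ∘ (A ⊗ ψ) ∘ (ν ⊗ A) = β_ν`. -/
def Pre3 (A V : C) (mu : A ⊗ A ⟶ A) (psi : V ⊗ A ⟶ A ⊗ V)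
    (nu : 𝟙_ C ⟶ A ⊗ V) : Prop :=
  (λ_ A).inv ≫ (nu ▷ A) ≫ phi A mu psi = beta A V mu nu

/-- `(A ⊗ V, μ_{A⊗V})` is a weak crossed product: measuring, twisted and cocycle
conditions hold and `∇_{A⊗V} ∘ σ = σ`. -/
def WCP (A V : C) (eta : 𝟙_ C ⟶ A) (mu : A ⊗ A ⟶ A) (psi : V ⊗ A ⟶ A ⊗ V)
    (sig : V ⊗ V ⟶ A ⊗ V) : Prop :=
  Measuring A V mu psi ∧ Twisted A V mu psi sig ∧ Cocycle A V mu psi sig ∧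
    sig ≫ nabla A V eta mu psi = sig

/-- `(A ⊗ V, μ_{A⊗V})` is a weak crossed product with preunit `ν`. -/
def WCPpre (A V : C) (eta : 𝟙_ C ⟶ A) (mu : A ⊗ A ⟶ A) (psi : V ⊗ A ⟶ A ⊗ V)
    (sig : V ⊗ V ⟶ A ⊗ V) (nu : 𝟙_ C ⟶ A ⊗ V) : Prop :=
  WCP A V eta mu psi sig ∧ Pre1 A V eta mu psi sig nu ∧
    Pre2 A V eta mu psi sig nu ∧ Pre3 A V mu psi nu

/-- `(μ_A ⊗ Y) ∘ (A ⊗ γ) : A ⊗ X ⟶ A ⊗ Y` for `γ : X ⟶ A ⊗ Y`. -/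
def tmap (A : C) {X Y : C} (mu : A ⊗ A ⟶ A) (g : X ⟶ A ⊗ Y) : A ⊗ X ⟶ A ⊗ Y :=
  (A ◁ g) ≫ (α_ A A Y).inv ≫ (mu ▷ Y)

/-- Left `A`-linearity of `T : A ⊗ X ⟶ A ⊗ Y`:
`T ∘ (μ_A ⊗ X) = (μ_A ⊗ Y) ∘ (A ⊗ T)`. -/
def LeftLin (A : C) {X Y : C} (mu : A ⊗ A ⟶ A) (T : A ⊗ X ⟶ A ⊗ Y) : Prop :=
  (mu ▷ X) ≫ T = (α_ A A X).hom ≫ (A ◁ T) ≫ (α_ A A Y).inv ≫ (mu ▷ Y)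

/-- `ν` is a preunit for the associative product `m` on `X`. -/
def IsPreunit {X : C} (m : X ⊗ X ⟶ X) (nu : 𝟙_ C ⟶ X) : Prop :=
  (ρ_ X).inv ≫ (X ◁ nu) ≫ m = (λ_ X).inv ≫ (nu ▷ X) ≫ m ∧
  (ρ_ X).inv ≫ (X ◁ nu) ≫ m =
    (ρ_ X).inv ≫ (X ◁ ((λ_ (𝟙_ C)).inv ≫ (nu ⊗ₘ nu) ≫ m)) ≫ m

/-- Brzeziński normalization conditions: `ψ ∘ (η_V ⊗ A) = A ⊗ η_V`,
`ψ ∘ (V ⊗ η_A) = η_A ⊗ V`, `σ ∘ (η_V ⊗ V) = σ ∘ (V ⊗ η_V) = η_A ⊗ V`. -/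
def BrzNorm (A V : C) (eta : 𝟙_ C ⟶ A) (etaV : 𝟙_ C ⟶ V) (psi : V ⊗ A ⟶ A ⊗ V)
    (sig : V ⊗ V ⟶ A ⊗ V) : Prop :=
  (λ_ A).inv ≫ (etaV ▷ A) ≫ psi = (ρ_ A).inv ≫ (A ◁ etaV) ∧
  (ρ_ V).inv ≫ (V ◁ eta) ≫ psi = (λ_ V).inv ≫ (eta ▷ V) ∧
  (λ_ V).inv ≫ (etaV ▷ V) ≫ sig = (λ_ V).inv ≫ (eta ▷ V) ∧
  (ρ_ V).inv ≫ (V ◁ etaV) ≫ sig = (λ_ V).inv ≫ (eta ▷ V)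

section Monoid

variable {A : C} {eta : 𝟙_ C ⟶ A} {mu : A ⊗ A ⟶ A}

theorem etaT_tmap (hA : IsMon A eta mu) {X Y : C} (g : X ⟶ A ⊗ Y) :
    etaT A X eta ≫ tmap A mu g = g := by
  simp only [etaT, tmap, Category.assoc]
  slice_lhs 2 3 => rw [← whisker_exchange]
  slice_lhs 3 4 => rw [associator_inv_naturality_left]
  slice_lhs 4 5 => rw [← comp_whiskerRight, hA.1]
  monoidal

theorem phi_eq_tmap {X Z Y : C} (f : X ⊗ Z ⟶ A ⊗ Y) :
    phi A mu f = (α_ A X Z).hom ≫ tmap A mu f := rfl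

theorem etaT_whiskerRight_phi (hA : IsMon A eta mu) {X Z Y : C} (f : X ⊗ Z ⟶ A ⊗ Y) :
    (etaT A X eta ▷ Z) ≫ phi A mu f = f := by
  have hcoh : (etaT A X eta ▷ Z) ≫ (α_ A X Z).hom = etaT A (X ⊗ Z) eta := by
    simp only [etaT]; monoidal
  rw [phi_eq_tmap, reassoc_of% hcoh, etaT_tmap hA]

theorem leftLin_tmap (hA : IsMon A eta mu) {X Y : C} (g : X ⟶ A ⊗ Y) :
    LeftLin A mu (tmap A mu g) := by
  simp only [LeftLin, tmap, MonoidalCategory.whiskerLeft_comp, Category.assoc]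
  slice_lhs 1 2 => rw [← whisker_exchange]
  slice_lhs 2 3 => rw [associator_inv_naturality_left]
  slice_lhs 3 4 => rw [← comp_whiskerRight, hA.2.2]
  slice_rhs 4 5 => rw [associator_inv_naturality_middle]
  simp only [comp_whiskerRight, Category.assoc]
  monoidal

theorem LeftLin.comp {X Y Z : C} {T : A ⊗ X ⟶ A ⊗ Y} {S : A ⊗ Y ⟶ A ⊗ Z}
    (hT : LeftLin A mu T) (hS : LeftLin A mu S) : LeftLin A mu (T ≫ S) := by
  simp only [LeftLin] at hT hS ⊢
  rw [reassoc_of% hT]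
  simp [hS]

theorem tmap_etaT_comp (hA : IsMon A eta mu) {X Y : C} {T : A ⊗ X ⟶ A ⊗ Y}
    (hT : LeftLin A mu T) : tmap A mu (etaT A X eta ≫ T) = T := by
  have hT' : (A ◁ T) ≫ (α_ A A Y).inv ≫ (mu ▷ Y) = (α_ A A X).inv ≫ (mu ▷ X) ≫ T := by
    rw [hT]; simp
  simp only [tmap, etaT, MonoidalCategory.whiskerLeft_comp, Category.assoc, hT']
  slice_lhs 2 3 => rw [associator_inv_naturality_middle]
  slice_lhs 3 4 => rw [← comp_whiskerRight, hA.2.1]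
  monoidal

theorem phi_whiskerRight_phi (hA : IsMon A eta mu) {U B X Z Y : C}
    (f : U ⊗ B ⟶ A ⊗ X) (g : X ⊗ Z ⟶ A ⊗ Y) :
    (phi A mu f ▷ Z) ≫ phi A mu g =
      ((α_ A U B).hom ▷ Z) ≫ phi A mu ((f ▷ Z) ≫ phi A mu g) := by
  simp only [phi, comp_whiskerRight, MonoidalCategory.whiskerLeft_comp, Category.assoc]
  slice_lhs 4 5 => rw [associator_naturality_left]
  slice_lhs 5 6 => rw [← whisker_exchange]
  slice_lhs 6 7 => rw [associator_inv_naturality_left]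
  slice_lhs 7 8 => rw [← comp_whiskerRight, hA.2.2]
  slice_rhs 7 8 => rw [associator_inv_naturality_middle]
  simp only [comp_whiskerRight, Category.assoc]
  monoidal

end Monoid

section Measuring

variable {A V : C} {eta : 𝟙_ C ⟶ A} {mu : A ⊗ A ⟶ A} {psi : V ⊗ A ⟶ A ⊗ V}

theorem nabla_eq_tmap :
    nabla A V eta mu psi = tmap A mu ((ρ_ V).inv ≫ (V ◁ eta) ≫ psi) := by
  simp only [nabla, phi, tmap, MonoidalCategory.whiskerLeft_comp, Category.assoc]
  monoidal

theorem etaT_nabla (hA : IsMon A eta mu) :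
    etaT A V eta ≫ nabla A V eta mu psi = (ρ_ V).inv ≫ (V ◁ eta) ≫ psi := by
  rw [nabla_eq_tmap, etaT_tmap hA]

theorem leftLin_nabla (hA : IsMon A eta mu) : LeftLin A mu (nabla A V eta mu psi) :=
  nabla_eq_tmap (psi := psi) ▸ leftLin_tmap hA _

theorem psi_nabla (hA : IsMon A eta mu) (hps : Measuring A V mu psi) :
    psi ≫ nabla A V eta mu psi = psi := by
  simp only [nabla]
  rw [rightUnitor_inv_naturality_assoc]
  slice_lhs 2 3 => rw [← whisker_exchange]
  slice_lhs 3 4 => rw [hps]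
  slice_lhs 2 3 => rw [associator_naturality_right]
  slice_lhs 3 4 => rw [← MonoidalCategory.whiskerLeft_comp, hA.2.1]
  monoidal

theorem nabla_whiskerRight_phi_of_balanced (hA : IsMon A eta mu) {Z Y : C}
    (act : A ⊗ Z ⟶ Z) (hact : (λ_ Z).inv ≫ (eta ▷ Z) ≫ act = 𝟙 Z)
    (f : V ⊗ Z ⟶ A ⊗ Y) (hf : (psi ▷ Z) ≫ phi A mu f = (α_ V A Z).hom ≫ (V ◁ act) ≫ f) :
    (nabla A V eta mu psi ▷ Z) ≫ phi A mu f = phi A mu f := by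
  have hunit : ((ρ_ V).inv ▷ Z) ≫ ((V ◁ eta) ▷ Z) ≫ (α_ V A Z).hom ≫ (V ◁ act) = 𝟙 _ := by
    calc _ = V ◁ ((λ_ Z).inv ≫ (eta ▷ Z) ≫ act) := by monoidal
      _ = 𝟙 _ := by rw [hact, MonoidalCategory.whiskerLeft_id]
  conv_lhs => rw [nabla]
  simp only [comp_whiskerRight, Category.assoc]
  rw [phi_whiskerRight_phi hA, hf]
  calc _ = phi A mu ((((ρ_ V).inv ▷ Z) ≫ ((V ◁ eta) ▷ Z) ≫ (α_ V A Z).hom ≫ (V ◁ act)) ≫ f) := by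
        simp only [phi, MonoidalCategory.whiskerLeft_comp, Category.assoc]
        monoidal
    _ = phi A mu f := by rw [hunit, Category.id_comp]

theorem nabla_whiskerRight_phi (hA : IsMon A eta mu) (hps : Measuring A V mu psi) :
    (nabla A V eta mu psi ▷ A) ≫ phi A mu psi = phi A mu psi :=
  nabla_whiskerRight_phi_of_balanced hA mu (by rw [hA.1]; simp) psi hps

theorem nabla_comp_nabla (hA : IsMon A eta mu) (hps : Measuring A V mu psi) :
    nabla A V eta mu psi ≫ nabla A V eta mu psi = nabla A V eta mu psi := by
  nth_rw 2 [nabla]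
  rw [rightUnitor_inv_naturality_assoc, ← whisker_exchange_assoc,
    nabla_whiskerRight_phi hA hps, nabla]

theorem etaT_nabla_whiskerRight_phi (hA : IsMon A eta mu) (hps : Measuring A V mu psi) :
    ((etaT A V eta ≫ nabla A V eta mu psi) ▷ A) ≫ phi A mu psi = psi := by
  rw [comp_whiskerRight, Category.assoc, nabla_whiskerRight_phi hA hps,
    etaT_whiskerRight_phi hA]

theorem nu_nabla (hA : IsMon A eta mu) {nu : 𝟙_ C ⟶ A ⊗ V} (h3 : Pre3 A V mu psi nu) :
    nu ≫ nabla A V eta mu psi = nu := by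
  have key : nu ≫ nabla A V eta mu psi = eta ≫ beta A V mu nu := by
    rw [← h3, nabla, rightUnitor_inv_naturality_assoc, ← whisker_exchange_assoc,
      leftUnitor_inv_naturality_assoc, unitors_inv_equal]
  rw [key, beta, rightUnitor_inv_naturality_assoc, ← whisker_exchange_assoc]
  slice_lhs 3 4 => rw [associator_inv_naturality_left]
  slice_lhs 4 5 => rw [← comp_whiskerRight, hA.1]
  monoidal

end Measuring

section Product

variable {A V : C} {eta : 𝟙_ C ⟶ A} {mu : A ⊗ A ⟶ A} {psi : V ⊗ A ⟶ A ⊗ V}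
  {sig : V ⊗ V ⟶ A ⊗ V}

theorem prodAV_eq_phi (hA : IsMon A eta mu) :
    prodAV A V mu psi sig = phi A mu ((α_ V A V).inv ≫ (psi ▷ V) ≫ phi A mu sig) := by
  simp only [prodAV, phi, tensorHom_def', MonoidalCategory.whiskerLeft_comp, Category.assoc]
  slice_lhs 7 8 => rw [associator_inv_naturality_left]
  slice_lhs 8 9 => rw [← comp_whiskerRight, hA.2.2]
  slice_rhs 7 8 => rw [associator_inv_naturality_middle]
  simp only [comp_whiskerRight, Category.assoc]
  monoidal

theorem psi_whiskerRight_phi_psi_sig (hA : IsMon A eta mu) (hps : Measuring A V mu psi) :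
    (psi ▷ (A ⊗ V)) ≫ phi A mu ((α_ V A V).inv ≫ (psi ▷ V) ≫ phi A mu sig) =
      (α_ V A (A ⊗ V)).hom ≫ (V ◁ ((α_ A A V).inv ≫ (mu ▷ V))) ≫
        (α_ V A V).inv ≫ (psi ▷ V) ≫ phi A mu sig := by
  have hps' : (V ◁ mu) ≫ psi = (α_ V A A).inv ≫ (psi ▷ A) ≫ phi A mu psi := by
    rw [hps]; simp
  rw [MonoidalCategory.whiskerLeft_comp]
  slice_rhs 3 4 => rw [associator_inv_naturality_middle]
  slice_rhs 4 5 => rw [← comp_whiskerRight, hps']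
  simp only [comp_whiskerRight, Category.assoc]
  rw [phi_whiskerRight_phi hA psi sig]
  simp only [phi, MonoidalCategory.whiskerLeft_comp, Category.assoc]
  monoidal

theorem nabla_whiskerRight_prodAV (hA : IsMon A eta mu) (hps : Measuring A V mu psi) :
    (nabla A V eta mu psi ▷ (A ⊗ V)) ≫ prodAV A V mu psi sig = prodAV A V mu psi sig := by
  rw [prodAV_eq_phi hA]
  refine nabla_whiskerRight_phi_of_balanced hA _ ?_ _ (psi_whiskerRight_phi_psi_sig hA hps)
  simpa only [etaT, tmap, MonoidalCategory.whiskerLeft_id, Category.id_comp,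
    Category.assoc] using
    etaT_tmap hA (𝟙 (A ⊗ V))

theorem whiskerLeft_beta_comp_phi_sig (hA : IsMon A eta mu) (hps : Measuring A V mu psi)
    {nu : 𝟙_ C ⟶ A ⊗ V} (h1 : Pre1 A V eta mu psi sig nu) :
    (V ◁ beta A V mu nu) ≫ (α_ V A V).inv ≫ (psi ▷ V) ≫ phi A mu sig = psi := by
  have hps' : (V ◁ mu) ≫ psi = (α_ V A A).inv ≫ (psi ▷ A) ≫ phi A mu psi := by
    rw [hps]; simp
  have hcoh : (V ◁ (ρ_ A).inv) ≫ (V ◁ (A ◁ nu)) ≫ (V ◁ (α_ A A V).inv) ≫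
      (α_ V (A ⊗ A) V).inv ≫ ((α_ V A A).inv ▷ V) =
      (ρ_ (V ⊗ A)).inv ≫ ((V ⊗ A) ◁ nu) ≫ (α_ (V ⊗ A) A V).inv := by
    monoidal
  have hpre1 : (ρ_ (A ⊗ V)).inv ≫ ((A ⊗ V) ◁ nu) ≫ (α_ (A ⊗ V) A V).inv ≫
      ((α_ A V A).hom ▷ V) ≫ phi A mu ((psi ▷ V) ≫ phi A mu sig) = nabla A V eta mu psi := by
    calc _ = tmap A mu ((ρ_ V).inv ≫ (V ◁ nu) ≫ (α_ V A V).inv ≫ (psi ▷ V) ≫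
          phi A mu sig) := by
          simp only [tmap, phi, MonoidalCategory.whiskerLeft_comp, Category.assoc]
          monoidal
      _ = nabla A V eta mu psi := by rw [h1, etaT_nabla hA, ← nabla_eq_tmap]
  simp only [beta, MonoidalCategory.whiskerLeft_comp, Category.assoc]
  slice_lhs 4 5 => rw [associator_inv_naturality_middle]
  slice_lhs 5 6 => rw [← comp_whiskerRight, hps']
  simp only [comp_whiskerRight, Category.assoc]
  rw [phi_whiskerRight_phi hA psi sig]
  slice_lhs 1 5 => rw [hcoh]
  slice_lhs 3 4 => rw [← associator_inv_naturality_left]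
  slice_lhs 2 3 => rw [whisker_exchange]
  slice_lhs 1 2 => rw [← rightUnitor_inv_naturality]
  simp only [Category.assoc]
  rw [hpre1, psi_nabla hA hps]

theorem whiskerLeft_beta_prodAV (hA : IsMon A eta mu) (hps : Measuring A V mu psi)
    {nu : 𝟙_ C ⟶ A ⊗ V} (h1 : Pre1 A V eta mu psi sig nu) :
    ((A ⊗ V) ◁ beta A V mu nu) ≫ prodAV A V mu psi sig = phi A mu psi := by
  calc _ = (α_ A V A).hom ≫ (A ◁ ((V ◁ beta A V mu nu) ≫ (α_ V A V).inv ≫ (psi ▷ V) ≫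
          phi A mu sig)) ≫ (α_ A A V).inv ≫ (mu ▷ V) := by
        rw [prodAV_eq_phi hA]
        simp only [phi, MonoidalCategory.whiskerLeft_comp, Category.assoc]
        monoidal
    _ = phi A mu psi := by rw [whiskerLeft_beta_comp_phi_sig hA hps h1, phi]

theorem etaT_nabla_tensorHom_prodAV (hA : IsMon A eta mu) (hps : Measuring A V mu psi)
    (htw : Twisted A V mu psi sig) (hsn : sig ≫ nabla A V eta mu psi = sig) :
    ((etaT A V eta ≫ nabla A V eta mu psi) ⊗ₘ (etaT A V eta ≫ nabla A V eta mu psi)) ≫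
      prodAV A V mu psi sig = sig := by
  have hstep : sig ≫ (ρ_ (A ⊗ V)).inv ≫ ((A ⊗ V) ◁ eta) =
      (ρ_ (V ⊗ V)).inv ≫ ((V ⊗ V) ◁ eta) ≫ (sig ▷ A) := by
    rw [rightUnitor_inv_naturality_assoc, ← whisker_exchange]
  rw [tensorHom_def', comp_whiskerRight, Category.assoc, Category.assoc,
    nabla_whiskerRight_prodAV hA hps, prodAV_eq_phi hA, etaT_whiskerRight_phi hA,
    etaT_nabla hA]
  conv_rhs => rw [← hsn, nabla]
  rw [reassoc_of% hstep, htw]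
  simp only [MonoidalCategory.whiskerLeft_comp, Category.assoc]
  monoidal

end Product

section Transfer

variable {A V W : C} {eta : 𝟙_ C ⟶ A} {mu : A ⊗ A ⟶ A} {T : A ⊗ V ⟶ A ⊗ W}

theorem beta_comp_of_leftLin (hT : LeftLin A mu T) (nu : 𝟙_ C ⟶ A ⊗ V) :
    beta A V mu nu ≫ T = beta A W mu (nu ≫ T) := by
  have hT' : (A ◁ T) ≫ (α_ A A W).inv ≫ (mu ▷ W) = (α_ A A V).inv ≫ (mu ▷ V) ≫ T := by
    rw [hT]; simp
  simp only [beta, Category.assoc, MonoidalCategory.whiskerLeft_comp, hT']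

theorem phi_psi_comp_of_leftLin_of_mul (hA : IsMon A eta mu)
    {psiV : V ⊗ A ⟶ A ⊗ V} {sigV : V ⊗ V ⟶ A ⊗ V} {nuV : 𝟙_ C ⟶ A ⊗ V}
    {psiW : W ⊗ A ⟶ A ⊗ W} {sigW : W ⊗ W ⟶ A ⊗ W}
    (hpsV : Measuring A V mu psiV) (h1V : Pre1 A V eta mu psiV sigV nuV)
    (hpsW : Measuring A W mu psiW) (h1W : Pre1 A W eta mu psiW sigW (nuV ≫ T))
    (hT : LeftLin A mu T)
    (hm : prodAV A V mu psiV sigV ≫ T = (T ⊗ₘ T) ≫ prodAV A W mu psiW sigW) :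
    phi A mu psiV ≫ T = (T ▷ A) ≫ phi A mu psiW := by
  rw [← whiskerLeft_beta_prodAV hA hpsV h1V, ← whiskerLeft_beta_prodAV hA hpsW h1W,
    Category.assoc, hm, MonoidalCategory.tensorHom_def, Category.assoc, whisker_exchange_assoc,
    ← MonoidalCategory.whiskerLeft_comp_assoc, beta_comp_of_leftLin hT]

end Transfer

/-- Theorem, (ii) ⟹ (iii): from `T`, `S` one obtains `γ`, `θ`
satisfying the structure transfer equations. -/
theorem TS_gives_gamma_theta (A V W : C) (eta : 𝟙_ C ⟶ A) (mu : A ⊗ A ⟶ A)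
    (hA : IsMon A eta mu)
    (psiV : V ⊗ A ⟶ A ⊗ V) (sigV : V ⊗ V ⟶ A ⊗ V) (nuV : 𝟙_ C ⟶ A ⊗ V)
    (psiW : W ⊗ A ⟶ A ⊗ W) (sigW : W ⊗ W ⟶ A ⊗ W) (nuW : 𝟙_ C ⟶ A ⊗ W)
    (hV : WCPpre A V eta mu psiV sigV nuV) (hW : WCPpre A W eta mu psiW sigW nuW)
    (T : A ⊗ V ⟶ A ⊗ W) (S : A ⊗ W ⟶ A ⊗ V)
    (hT : LeftLin A mu T) (hS : LeftLin A mu S)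
    (hnu : nuV ≫ T = nuW)
    (hm : prodAV A V mu psiV sigV ≫ T = (T ⊗ₘ T) ≫ prodAV A W mu psiW sigW)
    (hTS : T ≫ S = nabla A V eta mu psiV) (hST : S ≫ T = nabla A W eta mu psiW) :
    ∀ (g : V ⟶ A ⊗ W) (th : W ⟶ A ⊗ V),
      g = (λ_ V).inv ≫ (eta ▷ V) ≫ T →
      th = (λ_ W).inv ≫ (eta ▷ W) ≫ S ≫ nabla A V eta mu psiV →
      (nuV = nuW ≫ tmap A mu th ∧
       th = th ≫ nabla A V eta mu psiV ∧
       psiW = (th ▷ A) ≫ (α_ A V A).hom ≫ (A ◁ psiV) ≫ (α_ A A V).inv ≫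
         (mu ⊗ₘ g) ≫ (α_ A A W).inv ≫ (mu ▷ W) ∧
       sigW = (th ⊗ₘ th) ≫ prodAV A V mu psiV sigV ≫ tmap A mu g ∧
       g ≫ tmap A mu th = etaT A V eta ≫ nabla A V eta mu psiV) := by
  intro g th hg hth
  obtain ⟨⟨hpsV, -, -, -⟩, h1V, -, h3V⟩ := hV
  obtain ⟨⟨hpsW, htwW, -, hsnW⟩, h1W, -, -⟩ := hW
  have hgT : tmap A mu g = T := by
    rw [hg, ← Category.assoc]; exact tmap_etaT_comp hA hT
  have hthS : tmap A mu th = S ≫ nabla A V eta mu psiV := by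
    rw [hth, ← Category.assoc]; exact tmap_etaT_comp hA (hS.comp (leftLin_nabla hA))
  have hthT : th ≫ T = etaT A W eta ≫ nabla A W eta mu psiW := by
    rw [hth, ← hTS]
    simp only [etaT, Category.assoc]
    rw [reassoc_of% hST, hST, nabla_comp_nabla hA hpsW]
  have hpsiT := phi_psi_comp_of_leftLin_of_mul hA hpsV h1V hpsW (hnu ▸ h1W) hT hm
  refine ⟨?_, ?_, ?_, ?_, ?_⟩
  · rw [hthS, ← hnu, Category.assoc, reassoc_of% hTS, nabla_comp_nabla hA hpsV, nu_nabla hA h3V]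
  · rw [hth]; simp only [Category.assoc, nabla_comp_nabla hA hpsV]
  · conv_lhs => rw [← etaT_nabla_whiskerRight_phi hA hpsW, ← hthT, comp_whiskerRight,
      Category.assoc, ← hpsiT, ← hgT]
    simp only [phi, tmap, MonoidalCategory.tensorHom_def, Category.assoc]
  · rw [hgT, hm, MonoidalCategory.tensorHom_comp_tensorHom_assoc, hthT,
      etaT_nabla_tensorHom_prodAV hA hpsW htwW hsnW]
  · rw [hthS, hg, etaT]
    simp only [Category.assoc]
    rw [reassoc_of% hTS, nabla_comp_nabla hA hpsV]

end WeakCrossed
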